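/- Let X be an irreducible recurrent Markov chain on a countable set S with transition matrix P, K ⊆ A ⊆ S finite, z ∈ K, K̃ = K \ {z}, A' = A \ K, T = inf{n ≥ 0 : X_n ∈ A^c}, T_K = inf{n ≥ 1 : X_n ∈ K}, ψ(z) = inf{n ≥ 0 : X_n = z}. Suppose q : S → ℝ₊ satisfies A1(q) with Lyapunov function v, and set f(x) = 𝔼_x Σ_{j=0}^{ψ(z)−1} q(X_j), G(x,y) = ℙ_x(X_{T_K} = y, T_K < T) for x,y ∈ K̃, ξ(x) = ℙ_x(T < T_K), k(x,q) = 𝔼_x Σ_{j=0}^{(T_K ∧ T)−1} q(X_j), k̃'(x,q) = 𝔼_x[v(X_T) I(T < T_K)], and β(x,q) = k(x,q) + k̃'(x,q). Then for every x ∈ K̃: f(x) ≤ β(x,q) + Σ_{y ∈ K̃} G(x,y) f(y) + ξ(x) · max_{w ∈ K̃} f(w). -/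

import Mathlib

/-!
Split the reward collected before `ψ(z)` at the stopping time `σ = T_K ∧ T`. The part before `σ`
is `k(x,q)`; by the strong Markov property the rest is `𝔼_x f(X_σ)`. If `X_σ ∈ K̃` then
`T_K < T`, which gives the `G f` term; `f(z) = 0`; otherwise `X_σ = X_T ∉ A`, and splitting once
more at `T_K` gives `f(X_T) ≤ v(X_T) + max_{K̃} f`: from outside `K` the drift condition bounds
the reward collected before `T_K` by `v` (induction on a truncation of `T_K`, then monotone
convergence), and at `T_K` the chain is in `K`, where `f ≤ max_{K̃} f`.

The Markov property is obtained from the finite-dimensional distributions `MC.fdd` by a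
π-system argument on the cylinders `pathCylinder n γ`.
-/

open MeasureTheory ENNReal Filter

set_option autoImplicit false

noncomputable section

/-- `n`-step transition probabilities of a transition matrix `P`. -/
def mstep {S : Type*} [DecidableEq S] (P : S → S → ℝ) : ℕ → S → S → ℝ
  | 0 => fun x y => if x = y then (1 : ℝ) else 0
  | (n + 1) => fun x y => ∑' z : S, mstep P n x z * P z y

/-- A Markov chain on a state space `S`: a stochastic transition matrix together
with the family of path-space laws `μ x` (law of the chain started at `x`),
characterized by its finite-dimensional distributions. -/
structure MC (S : Type*) [DecidableEq S] [MeasurableSpace S] where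
  P : S → S → ℝ
  μ : S → Measure (ℕ → S)
  prob : ∀ x, IsProbabilityMeasure (μ x)
  nonneg : ∀ x y, 0 ≤ P x y
  rowsum : ∀ x, HasSum (P x) 1
  fdd : ∀ (x : S) (n : ℕ) (γ : ℕ → S),
      μ x {ω | ∀ i ≤ n, ω i = γ i}
        = if γ 0 = x then ∏ i ∈ Finset.range n, ENNReal.ofReal (P (γ i) (γ (i + 1))) else 0

variable {S : Type*} [DecidableEq S] [MeasurableSpace S]

def MC.Irreducible (X : MC S) : Prop :=
  ∀ x y : S, ∃ n : ℕ, 0 < mstep X.P n x y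

def MC.Recurrent (X : MC S) : Prop :=
  ∀ x : S, X.μ x {ω | ∃ n : ℕ, 1 ≤ n ∧ ω n = x} = 1

/-- first time `n ≥ m` at which the path is in `B` (`⊤` if there is none). -/
def hit (m : ℕ) (B : Set S) (ω : ℕ → S) : ℕ∞ :=
  sInf {t : ℕ∞ | ∃ n : ℕ, t = (n : ℕ∞) ∧ m ≤ n ∧ ω n ∈ B}

/-- the path evaluated at an extended time (junk value at `⊤`). -/
def evalAt (ω : ℕ → S) (t : ℕ∞) : S := ω t.toNat

/-- `Σ_{j=0}^{τ(ω)-1} q(ω_j)` as an extended real. -/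
def pathReward (q : S → ℝ) (τ : (ℕ → S) → ℕ∞) (ω : ℕ → S) : ℝ≥0∞ :=
  ∑' j : ℕ, if (j : ℕ∞) < τ ω then ENNReal.ofReal (q (ω j)) else 0

/-- `𝔼_x Σ_{j=0}^{τ-1} q(X_j)`. -/
def MC.ER (X : MC S) (x : S) (q : S → ℝ) (τ : (ℕ → S) → ℕ∞) : ℝ≥0∞ :=
  ∫⁻ ω, pathReward q τ ω ∂ X.μ x

/-- Condition A1(q): `v` is a nonnegative Lyapunov function satisfying
`(Pv)(x) ≤ v(x) - q(x) + c·I(x ∈ K)` (with `Pv` an absolutely convergent sum). -/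
def MC.A1 (X : MC S) (K : Set S) (q v : S → ℝ) (c : ℝ) : Prop :=
  (∀ x, 0 ≤ v x) ∧ (∀ x : S, Summable fun y => X.P x y * v y) ∧
    ∀ x : S, (∑' y : S, X.P x y * v y) ≤ v x - q x + K.indicator (fun _ => c) x

/-- `T = inf{n ≥ 0 : X_n ∈ Aᶜ}`. -/
def TA (A : Finset S) (ω : ℕ → S) : ℕ∞ := hit 0 ((A : Set S))ᶜ ω

/-- `T_K = inf{n ≥ 1 : X_n ∈ K}`. -/
def TKt (K : Finset S) (ω : ℕ → S) : ℕ∞ := hit 1 (K : Set S) ω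

/-- `τ(z) = inf{n ≥ 1 : X_n = z}`. -/
def tauz (z : S) (ω : ℕ → S) : ℕ∞ := hit 1 {z} ω

/-- `ψ(z) = inf{n ≥ 0 : X_n = z}`. -/
def psiz (z : S) (ω : ℕ → S) : ℕ∞ := hit 0 {z} ω

/-- sub-block of a transition matrix. -/
def blk (P : S → S → ℝ) (F G : Finset S) : Matrix ↥F ↥G ℝ :=
  Matrix.of fun x y => P x.1 y.1

/-- `G(x,y) = ℙ_x(X_{T_K} = y, T_K < T)` for `x, y ∈ K̃ = K \ {z}`. -/
def Gmat (X : MC S) (K A : Finset S) (z : S) :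
    Matrix ↥(K.erase z) ↥(K.erase z) ℝ :=
  Matrix.of fun x y =>
    (X.μ x.1 {ω | TKt K ω < TA A ω ∧ evalAt ω (TKt K ω) = y.1}).toReal

/-- `ξ(x) = ℙ_x(T < T_K)`. -/
def xiFun (X : MC S) (K A : Finset S) (x : S) : ℝ :=
  (X.μ x {ω | TA A ω < TKt K ω}).toReal

/-- `k(x,q) = 𝔼_x Σ_{j=0}^{(T_K ∧ T)-1} q(X_j)`. -/
def kFun (X : MC S) (K A : Finset S) (q : S → ℝ) (x : S) : ℝ :=
  (X.ER x q fun ω => min (TKt K ω) (TA A ω)).toReal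

/-- `k̃'(x,q) = 𝔼_x[v(X_T); T < T_K]`. -/
def kpFun (X : MC S) (K A : Finset S) (v : S → ℝ) (x : S) : ℝ :=
  (∫⁻ ω, (if TA A ω < TKt K ω then ENNReal.ofReal (v (evalAt ω (TA A ω))) else 0)
      ∂ X.μ x).toReal

/-- `β(x,q) = k(x,q) + k̃'(x,q)`. -/
def betaFun (X : MC S) (K A : Finset S) (q v : S → ℝ) (x : S) : ℝ :=
  kFun X K A q x + kpFun X K A v x

def xiVec (X : MC S) (K A : Finset S) (z : S) : ↥(K.erase z) → ℝ :=
  fun x => xiFun X K A x.1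

/-- the norm condition `‖(I-G)⁻¹ ξ‖_K̃ < 1`. -/
def normCond (X : MC S) (K A : Finset S) (z : S) : Prop :=
  ‖(1 - Gmat X K A z)⁻¹.mulVec (xiVec X K A z)‖ < 1

/-- `κ̰(·,q) = (I-G)⁻¹ k(q)` on `K̃`. -/
def kappaLoK (X : MC S) (K A : Finset S) (z : S) (q : S → ℝ) : ↥(K.erase z) → ℝ :=
  (1 - Gmat X K A z)⁻¹.mulVec fun y => kFun X K A q y.1

/-- `κ̃(·,q)` on `K̃`. -/
def kappaHiK (X : MC S) (K A : Finset S) (z : S) (q v : S → ℝ) : ↥(K.erase z) → ℝ :=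
  (1 - Gmat X K A z)⁻¹.mulVec (fun y => betaFun X K A q v y.1)
    + (‖(1 - Gmat X K A z)⁻¹.mulVec (fun y => betaFun X K A q v y.1)‖
        / (1 - ‖(1 - Gmat X K A z)⁻¹.mulVec (xiVec X K A z)‖))
      • (1 - Gmat X K A z)⁻¹.mulVec (xiVec X K A z)

/-- the matrix `(I - P₂₂)⁻¹ P₂₁`. -/
def WAK (X : MC S) (K A : Finset S) : Matrix ↥(A \ K) ↥K ℝ :=
  (1 - blk X.P (A \ K) (A \ K))⁻¹ * blk X.P (A \ K) K

/-- `κ̰(·,q)` on `A \ {z}` (extended by `0` off `A \ {z}`). -/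
def kappaLo (X : MC S) (K A : Finset S) (z : S) (q : S → ℝ) (x : S) : ℝ :=
  if hx : x ∈ K.erase z then kappaLoK X K A z q ⟨x, hx⟩
  else if hx' : x ∈ A \ K then
    kFun X K A q x + ∑ y : ↥(K.erase z),
      WAK X K A ⟨x, hx'⟩ ⟨y.1, Finset.mem_of_mem_erase y.2⟩ * kappaLoK X K A z q y
  else 0

/-- `κ̃(·,q)` on `A \ {z}` (extended by `0` off `A \ {z}`). -/
def kappaHi (X : MC S) (K A : Finset S) (z : S) (q v : S → ℝ) (x : S) : ℝ :=
  if hx : x ∈ K.erase z then kappaHiK X K A z q v ⟨x, hx⟩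
  else if hx' : x ∈ A \ K then
    betaFun X K A q v x
      + (∑ y : ↥(K.erase z),
          WAK X K A ⟨x, hx'⟩ ⟨y.1, Finset.mem_of_mem_erase y.2⟩ * kappaHiK X K A z q v y)
      + xiFun X K A x * ‖kappaHiK X K A z q v‖
  else 0

/-- `κ̰(z,q)`, the one-step extension of the lower bound at `z`. -/
def kappaLoZ (X : MC S) (K A : Finset S) (z : S) (q : S → ℝ) : ℝ :=
  q z + ∑ y ∈ A.erase z, X.P z y * kappaLo X K A z q y

/-- `κ̃(z,q)`, the one-step extension of the upper bound at `z`. -/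
def kappaHiZ (X : MC S) (K A : Finset S) (z : S) (q v : S → ℝ) : ℝ :=
  q z + (∑ y ∈ A.erase z, X.P z y * kappaHi X K A z q v y)
    + ∑' y : {y : S // y ∉ A}, X.P z y.1 * (v y.1 + ‖kappaHiK X K A z q v‖)

section HittingTimes

variable {α : Type*} {m n : ℕ} {B : Set α} {ω : ℕ → α}

theorem hit_le (hmn : m ≤ n) (hn : ω n ∈ B) : hit m B ω ≤ n :=
  sInf_le ⟨n, rfl, hmn, hn⟩

theorem le_hit_iff {t : ℕ∞} : t ≤ hit m B ω ↔ ∀ n, m ≤ n → ω n ∈ B → t ≤ n := by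
  simp only [hit, le_sInf_iff, Set.mem_ofPred_eq]
  exact ⟨fun h n hmn hn => h n ⟨n, rfl, hmn, hn⟩, fun h _ ⟨n, hn, hmn, hB⟩ => hn ▸ h n hmn hB⟩

theorem exists_hit_eq (h : hit m B ω ≠ ⊤) : ∃ n : ℕ, hit m B ω = n ∧ m ≤ n ∧ ω n ∈ B := by
  have hne : {t : ℕ∞ | ∃ n : ℕ, t = n ∧ m ≤ n ∧ ω n ∈ B}.Nonempty := by
    refine Set.nonempty_iff_ne_empty.2 fun he => h ?_
    simp [hit, he]
  exact csInf_mem hne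

theorem hit_le_coe_iff : hit m B ω ≤ n ↔ ∃ i, m ≤ i ∧ i ≤ n ∧ ω i ∈ B := by
  constructor
  · intro h
    obtain ⟨i, hi, hmi, hB⟩ := exists_hit_eq (ne_top_of_le_ne_top (ENat.natCast_ne_top n) h)
    exact ⟨i, hmi, by exact_mod_cast hi ▸ h, hB⟩
  · rintro ⟨i, hmi, hin, hB⟩
    exact (hit_le hmi hB).trans (by exact_mod_cast hin)

theorem mem_of_hit_eq (h : hit m B ω = n) : ω n ∈ B := by
  obtain ⟨i, hi, -, hB⟩ := exists_hit_eq (h ▸ ENat.natCast_ne_top n)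
  rwa [← ENat.natCast_inj.1 (hi.symm.trans h)]

def pathShift (n : ℕ) (ω : ℕ → α) : ℕ → α := fun k => ω (n + k)

theorem hit_eq_add_hit_pathShift {k : ℕ} (hm : m ≤ n + k)
    (h : ∀ i, m ≤ i → i < n + k → ω i ∉ B) :
    hit m B ω = n + hit k B (pathShift n ω) := by
  apply le_antisymm
  · rcases eq_or_ne (hit k B (pathShift n ω)) ⊤ with htop | hfin
    · simp [htop]
    · obtain ⟨j, hj, hkj, hB⟩ := exists_hit_eq hfin
      rw [hj]
      exact_mod_cast hit_le (ω := ω) (n := n + j) (by omega) hB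
  · refine le_hit_iff.2 fun i hmi hB => ?_
    obtain ⟨j, rfl⟩ : ∃ j, i = n + j := ⟨i - n, by
      by_contra hi; exact h i hmi (by omega) hB⟩
    have hkj : k ≤ j := by by_contra hj; exact h (n + j) hmi (by omega) hB
    push_cast
    exact add_le_add_right (hit_le (ω := pathShift n ω) hkj hB) _

end HittingTimes

section StoppingTimes

variable {α : Type*}

/-- Stopping times are phrased through `DependsOn` rather than a filtration: on a countable state
space the two notions agree (see `measurableSet_of_dependsOn`). -/
def IsNaturalStoppingTime (τ : (ℕ → α) → ℕ∞) : Prop :=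
  ∀ n : ℕ, DependsOn (fun ω => τ ω ≤ n) (Set.Iic n)

theorem isNaturalStoppingTime_const (t : ℕ∞) : IsNaturalStoppingTime fun _ : ℕ → α => t :=
  fun _ _ _ _ => rfl

theorem isNaturalStoppingTime_hit (m : ℕ) (B : Set α) : IsNaturalStoppingTime (hit m B) :=
  fun n ω ω' h => by
    simp only [hit_le_coe_iff]
    exact propext <| exists_congr fun i => and_congr_right fun _ => and_congr_right fun hin =>
      by rw [h i hin]

theorem isNaturalStoppingTime_TKt (K : Finset α) : IsNaturalStoppingTime (TKt K) :=
  isNaturalStoppingTime_hit 1 _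

theorem isNaturalStoppingTime_TA (A : Finset α) : IsNaturalStoppingTime (TA A) :=
  isNaturalStoppingTime_hit 0 _

theorem isNaturalStoppingTime_psiz (z : α) : IsNaturalStoppingTime (psiz z) :=
  isNaturalStoppingTime_hit 0 _

namespace IsNaturalStoppingTime

variable {τ τ' : (ℕ → α) → ℕ∞}

theorem min (hτ : IsNaturalStoppingTime τ) (hτ' : IsNaturalStoppingTime τ') :
    IsNaturalStoppingTime fun ω => min (τ ω) (τ' ω) := fun n ω ω' h => by
  simp only [min_le_iff, hτ n h, hτ' n h]

theorem dependsOn_coe_lt (hτ : IsNaturalStoppingTime τ) (n : ℕ) :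
    DependsOn (fun ω => (n : ℕ∞) < τ ω) (Set.Iic n) := fun ω ω' h => by
  simp only [← not_le, hτ n h]

theorem dependsOn_eq_coe (hτ : IsNaturalStoppingTime τ) (n : ℕ) :
    DependsOn (fun ω => τ ω = n) (Set.Iic n) := by
  have key : ∀ t : ℕ∞, t = n ↔ t ≤ n ∧ ∀ k < n, ¬ t ≤ k := by
    intro t
    refine ⟨fun ht => ⟨ht.le, fun k hk => by rw [ht]; exact_mod_cast hk.not_ge⟩, ?_⟩
    rintro ⟨htn, hk⟩
    lift t to ℕ using ne_top_of_le_ne_top (ENat.natCast_ne_top n) htn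
    have : t ≤ n := by exact_mod_cast htn
    exact congrArg _ (le_antisymm this (not_lt.1 fun h => hk t h le_rfl))
  intro ω ω' h
  simp only [key, hτ n h]
  exact propext <| and_congr_right fun _ => forall₂_congr fun k hk =>
    not_congr (iff_of_eq (hτ k fun i hi => h i (le_trans hi hk.le)))

end IsNaturalStoppingTime

end StoppingTimes

section PathMeasurability

variable {α : Type*}

theorem preimage_image_frestrictLe_of_dependsOn {E : Set (ℕ → α)} {n : ℕ}
    (hE : DependsOn (· ∈ E) (Set.Iic n)) :
    Preorder.frestrictLe n ⁻¹' (Preorder.frestrictLe n '' E) = E := by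
  refine subset_antisymm ?_ (Set.subset_preimage_image _ _)
  rintro ω ⟨ω', hω', heq⟩
  have : (ω' ∈ E) = (ω ∈ E) := hE fun i hi => congrFun heq ⟨i, Finset.mem_Iic.2 hi⟩
  exact this ▸ hω'

variable [MeasurableSpace α] [Countable α] [MeasurableSingletonClass α]

theorem measurableSet_of_dependsOn {E : Set (ℕ → α)} {n : ℕ}
    (hE : DependsOn (· ∈ E) (Set.Iic n)) : MeasurableSet E := by
  rw [← preimage_image_frestrictLe_of_dependsOn hE]
  exact Preorder.measurable_frestrictLe n (Set.to_countable _).measurableSet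

namespace IsNaturalStoppingTime

variable {τ τ' : (ℕ → α) → ℕ∞}

theorem measurableSet_eq_coe (hτ : IsNaturalStoppingTime τ) (n : ℕ) :
    MeasurableSet {ω | τ ω = n} :=
  measurableSet_of_dependsOn (hτ.dependsOn_eq_coe n)

theorem measurableSet_coe_lt (hτ : IsNaturalStoppingTime τ) (n : ℕ) :
    MeasurableSet {ω | (n : ℕ∞) < τ ω} :=
  measurableSet_of_dependsOn (hτ.dependsOn_coe_lt n)

theorem measurableSet_lt_and_evalAt_mem (hτ : IsNaturalStoppingTime τ)
    (hτ' : IsNaturalStoppingTime τ') (B : Set α) :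
    MeasurableSet {ω | τ ω < τ' ω ∧ evalAt ω (τ ω) ∈ B} := by
  have hU : {ω | τ ω < τ' ω ∧ evalAt ω (τ ω) ∈ B}
      = ⋃ n : ℕ, {ω | τ ω = n} ∩ {ω | (n : ℕ∞) < τ' ω} ∩ (fun ω => ω n) ⁻¹' B := by
    ext ω
    simp only [Set.mem_ofPred_eq, Set.mem_iUnion, Set.mem_inter_iff, Set.mem_preimage]
    constructor
    · rintro ⟨hlt, hB⟩
      obtain ⟨n, hn⟩ := ENat.ne_top_iff_exists.1 hlt.ne_top
      rw [evalAt, ← hn] at hB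
      exact ⟨n, ⟨hn.symm, hn ▸ hlt⟩, hB⟩
    · rintro ⟨n, ⟨hn, hlt⟩, hB⟩
      rw [hn]
      exact ⟨hlt, hB⟩
  rw [hU]
  exact .iUnion fun n => ((hτ.measurableSet_eq_coe n).inter (hτ'.measurableSet_coe_lt n)).inter
    (measurable_pi_apply n (Set.to_countable B).measurableSet)

theorem measurableSet_lt (hτ : IsNaturalStoppingTime τ) (hτ' : IsNaturalStoppingTime τ') :
    MeasurableSet {ω | τ ω < τ' ω} := by
  simpa using hτ.measurableSet_lt_and_evalAt_mem hτ' Set.univ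

end IsNaturalStoppingTime

theorem measurable_pathReward {τ : (ℕ → α) → ℕ∞} (hτ : IsNaturalStoppingTime τ) (q : α → ℝ) :
    Measurable (pathReward q τ) :=
  .tsum fun j => .ite (hτ.measurableSet_coe_lt j)
    (ENNReal.measurable_ofReal.comp ((measurable_of_countable q).comp (measurable_pi_apply j)))
    measurable_const

theorem measurable_pathReward_min_TKt (q : α → ℝ) (K : Finset α) (n : ℕ) :
    Measurable (pathReward q fun ω => min (n : ℕ∞) (TKt K ω)) :=
  measurable_pathReward ((isNaturalStoppingTime_const _).min (isNaturalStoppingTime_TKt K)) q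

end PathMeasurability

section Cylinders

variable {α : Type*} {n m : ℕ} {γ δ ω : ℕ → α}

/-- The sets whose measures `MC.fdd` prescribes. -/
def pathCylinder (n : ℕ) (γ : ℕ → α) : Set (ℕ → α) := {ω | ∀ i ≤ n, ω i = γ i}

theorem pathCylinder_eq_preimage_frestrictLe (n : ℕ) (γ : ℕ → α) :
    pathCylinder n γ = Preorder.frestrictLe (π := fun _ : ℕ => α) n ⁻¹'
      {Preorder.frestrictLe (π := fun _ : ℕ => α) n γ} := by
  ext ω
  simp [pathCylinder, funext_iff]

theorem pathCylinder_eq_of_mem (h : ω ∈ pathCylinder n γ) :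
    pathCylinder n γ = pathCylinder n ω := by
  ext ω'
  exact forall₂_congr fun i hi => by rw [h i hi]

theorem pathCylinder_inter_pathCylinder_self :
    pathCylinder n ω ∩ pathCylinder m ω = pathCylinder (max n m) ω := by
  ext ω'
  simp only [pathCylinder, Set.mem_inter_iff, Set.mem_ofPred_eq]
  exact ⟨fun ⟨h₁, h₂⟩ i hi => (le_max_iff.1 hi).elim (h₁ i) (h₂ i),
    fun h => ⟨fun i hi => h i (hi.trans (le_max_left _ _)),
      fun i hi => h i (hi.trans (le_max_right _ _))⟩⟩

theorem isPiSystem_pathCylinder : IsPiSystem {s : Set (ℕ → α) | ∃ n γ, s = pathCylinder n γ} := by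
  rintro _ ⟨n, γ, rfl⟩ _ ⟨m, δ, rfl⟩ ⟨ω, hγ, hδ⟩
  rw [pathCylinder_eq_of_mem hγ, pathCylinder_eq_of_mem hδ, pathCylinder_inter_pathCylinder_self]
  exact ⟨_, _, rfl⟩

theorem preimage_pathShift_inter_pathCylinder
    (h : ω ∈ pathShift n ⁻¹' pathCylinder m δ ∩ pathCylinder n γ) :
    pathShift n ⁻¹' pathCylinder m δ ∩ pathCylinder n γ = pathCylinder (n + m) ω := by
  rw [pathCylinder_eq_of_mem h.1, pathCylinder_eq_of_mem h.2]
  ext ω'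
  simp only [pathCylinder, pathShift, Set.mem_inter_iff, Set.mem_preimage, Set.mem_ofPred_eq]
  refine ⟨fun ⟨h₁, h₂⟩ i hi => ?_,
    fun h => ⟨fun j hj => h _ (by omega), fun i hi => h i (by omega)⟩⟩
  by_cases hin : i ≤ n
  · exact h₂ i hin
  · simpa [show n + (i - n) = i by omega] using h₁ (i - n) (by omega)

theorem preimage_pathShift_inter_pathCylinder_nonempty (h : δ 0 = γ n) :
    (pathShift n ⁻¹' pathCylinder m δ ∩ pathCylinder n γ).Nonempty := by
  refine ⟨fun j => if j ≤ n then γ j else δ (j - n), fun j _ => ?_, fun i hi => if_pos hi⟩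
  rcases Nat.eq_zero_or_pos j with rfl | hj
  · simp [pathShift, h]
  · simp [pathShift, show ¬ n + j ≤ n by omega]

variable [MeasurableSpace α]

theorem measurable_pathShift (n : ℕ) : Measurable (pathShift n : (ℕ → α) → ℕ → α) :=
  measurable_pi_lambda _ fun k => measurable_pi_apply (n + k)

variable [MeasurableSingletonClass α]

theorem measurableSet_pathCylinder (n : ℕ) (γ : ℕ → α) : MeasurableSet (pathCylinder n γ) := by
  rw [pathCylinder_eq_preimage_frestrictLe]
  exact Preorder.measurable_frestrictLe n (measurableSet_singleton _)

variable [Countable α]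

theorem generateFrom_pathCylinder :
    MeasurableSpace.generateFrom {s : Set (ℕ → α) | ∃ n γ, s = pathCylinder n γ}
      = MeasurableSpace.pi := by
  set G := MeasurableSpace.generateFrom {s : Set (ℕ → α) | ∃ n γ, s = pathCylinder n γ}
  refine le_antisymm (MeasurableSpace.generateFrom_le ?_) (iSup_le fun i => ?_)
  · rintro _ ⟨n, γ, rfl⟩
    exact measurableSet_pathCylinder n γ
  · have hr : Measurable[G] (Preorder.frestrictLe (π := fun _ => α) i) := by
      refine @measurable_to_countable' _ _ _ _ G _ fun a => ?_
      by_cases ha : a ∈ Set.range (Preorder.frestrictLe (π := fun _ : ℕ => α) i)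
      · obtain ⟨γ, rfl⟩ := ha
        rw [← pathCylinder_eq_preimage_frestrictLe]
        exact MeasurableSpace.measurableSet_generateFrom ⟨i, γ, rfl⟩
      · rw [Set.preimage_singleton_eq_empty.2 ha]
        exact @MeasurableSet.empty _ G
    exact measurable_iff_comap_le.1
      ((measurable_pi_apply (X := fun _ : Finset.Iic i => α) ⟨i, Finset.mem_Iic.2 le_rfl⟩).comp hr)

end Cylinders

def valueAt {α : Type*} (τ : (ℕ → α) → ℕ∞) (h : ℕ → (ℕ → α) → ℝ≥0∞) (ω : ℕ → α) : ℝ≥0∞ :=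
  ∑' n : ℕ, {ω | τ ω = n}.indicator (h n) ω

section ValueAt

variable {α : Type*} {τ : (ℕ → α) → ℕ∞} {h : ℕ → (ℕ → α) → ℝ≥0∞} {ω : ℕ → α}

theorem valueAt_of_eq_coe {n : ℕ} (hτ : τ ω = n) : valueAt τ h ω = h n ω := by
  rw [valueAt, tsum_eq_single n fun k hk => Set.indicator_of_notMem
    (fun hk' : ω ∈ {ω | τ ω = k} => hk (by exact_mod_cast hk'.symm.trans hτ)) (h k)]
  exact Set.indicator_of_mem (s := {ω | τ ω = n}) hτ (h n)

theorem valueAt_of_eq_top (hτ : τ ω = ⊤) : valueAt τ h ω = 0 :=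
  ENNReal.tsum_eq_zero.2 fun n => Set.indicator_of_notMem (by simp [hτ]) (h n)

end ValueAt

namespace MC

variable (X : MC S)

theorem measure_pathCylinder_add (x : S) (n m : ℕ) (ω : ℕ → S) :
    X.μ x (pathCylinder (n + m) ω)
      = X.μ x (pathCylinder n ω) * X.μ (ω n) (pathCylinder m (pathShift n ω)) := by
  simp only [pathCylinder, X.fdd, pathShift, add_zero, if_true, Finset.prod_range_add, add_assoc]
  split_ifs <;> simp

variable [Countable S] [MeasurableSingletonClass S]

theorem map_pathShift_restrict_pathCylinder (x : S) (n : ℕ) (γ : ℕ → S) :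
    ((X.μ x).restrict (pathCylinder n γ)).map (pathShift n)
      = X.μ x (pathCylinder n γ) • X.μ (γ n) := by
  have := X.prob x
  have := X.prob (γ n)
  refine ext_of_generate_finite _ generateFrom_pathCylinder.symm isPiSystem_pathCylinder ?_ ?_
  · rintro _ ⟨m, δ, rfl⟩
    rw [Measure.map_apply (measurable_pathShift n) (measurableSet_pathCylinder m δ),
      Measure.restrict_apply (measurable_pathShift n (measurableSet_pathCylinder m δ)),
      Measure.smul_apply, smul_eq_mul]
    by_cases hδ : δ 0 = γ n
    · obtain ⟨ω, hω⟩ := preimage_pathShift_inter_pathCylinder_nonempty (m := m) hδ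
      rw [preimage_pathShift_inter_pathCylinder hω, X.measure_pathCylinder_add,
        ← pathCylinder_eq_of_mem hω.2, ← pathCylinder_eq_of_mem hω.1, hω.2 n le_rfl]
    · have h0 : X.μ (γ n) (pathCylinder m δ) = 0 := (X.fdd (γ n) m δ).trans (if_neg hδ)
      suffices hempty : pathShift n ⁻¹' pathCylinder m δ ∩ pathCylinder n γ = ∅ by
        rw [h0, mul_zero, hempty, measure_empty]
      refine Set.not_nonempty_iff_eq_empty.1 fun ⟨ω, hω₁, hω₂⟩ => ?_
      exact hδ (by simpa [pathShift, hω₂ n le_rfl] using (hω₁ 0 (Nat.zero_le m)).symm)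
  · rw [Measure.map_apply (measurable_pathShift n) .univ, Set.preimage_univ,
      Measure.restrict_apply_univ, Measure.smul_apply, measure_univ, smul_eq_mul, mul_one]

theorem setLIntegral_pathCylinder_comp_pathShift (x : S) (n : ℕ) (γ : ℕ → S)
    {g : (ℕ → S) → ℝ≥0∞} (hg : Measurable g) :
    ∫⁻ ω in pathCylinder n γ, g (pathShift n ω) ∂X.μ x
      = ∫⁻ ω in pathCylinder n γ, ∫⁻ ω', g ω' ∂X.μ (ω n) ∂X.μ x := by
  rw [← lintegral_map hg (measurable_pathShift n), X.map_pathShift_restrict_pathCylinder,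
    lintegral_smul_measure, setLIntegral_congr_fun (measurableSet_pathCylinder n γ)
      fun ω hω => by rw [hω n le_rfl], setLIntegral_const, smul_eq_mul, mul_comm]

theorem setLIntegral_comp_pathShift (x : S) {n : ℕ} {E : Set (ℕ → S)}
    (hE : DependsOn (· ∈ E) (Set.Iic n)) {g : (ℕ → S) → ℝ≥0∞} (hg : Measurable g) :
    ∫⁻ ω in E, g (pathShift n ω) ∂X.μ x = ∫⁻ ω in E, ∫⁻ ω', g ω' ∂X.μ (ω n) ∂X.μ x := by
  rw [← preimage_image_frestrictLe_of_dependsOn hE, ← Set.biUnion_preimage_singleton]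
  have hfib := Set.pairwiseDisjoint_fiber (Preorder.frestrictLe (π := fun _ : ℕ => S) n)
    (Preorder.frestrictLe n '' E)
  have hmeas : ∀ a ∈ Preorder.frestrictLe n '' E,
      MeasurableSet (Preorder.frestrictLe (π := fun _ : ℕ => S) n ⁻¹' {a}) :=
    fun a _ => Preorder.measurable_frestrictLe n (measurableSet_singleton a)
  rw [lintegral_biUnion (Set.to_countable _) hmeas hfib,
    lintegral_biUnion (Set.to_countable _) hmeas hfib]
  refine tsum_congr fun ⟨a, γ, _, hγ⟩ => ?_
  subst hγ
  simp only [← pathCylinder_eq_preimage_frestrictLe]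
  exact X.setLIntegral_pathCylinder_comp_pathShift x n γ hg

/-- The strong Markov property. -/
theorem lintegral_valueAt_comp_pathShift (x : S) {τ : (ℕ → S) → ℕ∞}
    (hτ : IsNaturalStoppingTime τ) {g : (ℕ → S) → ℝ≥0∞} (hg : Measurable g) :
    ∫⁻ ω, valueAt τ (fun n ω => g (pathShift n ω)) ω ∂X.μ x
      = ∫⁻ ω, valueAt τ (fun n ω => ∫⁻ ω', g ω' ∂X.μ (ω n)) ω ∂X.μ x := by
  simp only [valueAt]
  rw [lintegral_tsum (f := fun (n : ℕ) => {ω | τ ω = n}.indicator fun ω => g (pathShift n ω))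
      fun n => ((hg.comp (measurable_pathShift n)).indicator
      (hτ.measurableSet_eq_coe n)).aemeasurable,
    lintegral_tsum (f := fun (n : ℕ) => {ω | τ ω = n}.indicator fun ω => ∫⁻ ω', g ω' ∂X.μ (ω n))
      fun n => (((measurable_of_countable fun y => ∫⁻ ω', g ω' ∂X.μ y).comp
        (measurable_pi_apply n)).indicator (hτ.measurableSet_eq_coe n)).aemeasurable]
  refine tsum_congr fun n => ?_
  rw [lintegral_indicator (hτ.measurableSet_eq_coe n),
    lintegral_indicator (hτ.measurableSet_eq_coe n)]
  exact X.setLIntegral_comp_pathShift x (hτ.dependsOn_eq_coe n) hg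

end MC

section PathReward

variable {α : Type*} {q : α → ℝ} {τ τ' : (ℕ → α) → ℕ∞} {ω : ℕ → α}

theorem pathReward_mono (h : τ ω ≤ τ' ω) : pathReward q τ ω ≤ pathReward q τ' ω :=
  ENNReal.tsum_le_tsum fun j => by
    by_cases hj : (j : ℕ∞) < τ ω
    · simp [hj, hj.trans_le h]
    · simp [hj]

theorem pathReward_of_eq_coe {n : ℕ} (h : τ ω = n) :
    pathReward q τ ω = ∑ j ∈ Finset.range n, ENNReal.ofReal (q (ω j)) := by
  rw [pathReward, h, tsum_eq_sum (s := Finset.range n) fun j hj => if_neg (by simpa using hj)]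
  exact Finset.sum_congr rfl fun j hj => if_pos (by simpa using hj)

theorem pathReward_eq_sum_add_pathShift {n : ℕ} (h : τ ω = n + τ' (pathShift n ω)) :
    pathReward q τ ω
      = ∑ j ∈ Finset.range n, ENNReal.ofReal (q (ω j)) + pathReward q τ' (pathShift n ω) := by
  rw [pathReward, ← ENNReal.summable.sum_add_tsum_nat_add' (k := n)]
  congr 1
  · refine Finset.sum_congr rfl fun j hj => if_pos ?_
    rw [h]
    exact (by simpa using hj : (j : ℕ∞) < n).trans_le le_self_add
  · refine tsum_congr fun i => ?_
    rw [h, show ((i + n : ℕ) : ℕ∞) = n + i by push_cast; ring]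
    simp only [ENat.add_lt_add_iff_left (ENat.natCast_ne_top n), pathShift, add_comm n i]

theorem pathReward_psiz_le_add_valueAt (z : α) (τ : (ℕ → α) → ℕ∞) (ω : ℕ → α) :
    pathReward q (psiz z) ω
      ≤ pathReward q τ ω + valueAt τ (fun n ω => pathReward q (psiz z) (pathShift n ω)) ω := by
  rcases le_or_gt (psiz z ω) (τ ω) with hle | hlt
  · exact le_add_right (pathReward_mono hle)
  obtain ⟨n, hn⟩ := ENat.ne_top_iff_exists.1 (ne_top_of_lt hlt)
  have hψ : psiz z ω = n + psiz z (pathShift n ω) := by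
    refine hit_eq_add_hit_pathShift (Nat.zero_le _) fun i _ hi hiz => ?_
    have : psiz z ω ≤ i := hit_le (Nat.zero_le i) hiz
    exact absurd (hlt.trans_le this) (by rw [← hn]; exact_mod_cast hi.not_gt)
  rw [pathReward_eq_sum_add_pathShift hψ, pathReward_of_eq_coe hn.symm,
    valueAt_of_eq_coe hn.symm]

theorem pathReward_eq_iSup_min (q : α → ℝ) (τ : (ℕ → α) → ℕ∞) (ω : ℕ → α) :
    pathReward q τ ω = ⨆ n : ℕ, pathReward q (fun ω => min (n : ℕ∞) (τ ω)) ω := by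
  refine le_antisymm ?_ (iSup_le fun n => pathReward_mono (min_le_right _ _))
  rw [pathReward, ENNReal.tsum_eq_iSup_nat]
  refine iSup_mono fun n => le_of_eq_of_le (Finset.sum_congr rfl fun j hj => ?_)
    (ENNReal.sum_le_tsum _)
  have hjn : (j : ℕ∞) < n := by simpa using hj
  simp [hjn]

theorem pathReward_min_succ_TKt (K : Finset α) (n : ℕ) (ω : ℕ → α) :
    pathReward q (fun ω => min ((n + 1 : ℕ) : ℕ∞) (TKt K ω)) ω
      = ENNReal.ofReal (q (ω 0))
        + {ω | ω 1 ∉ K}.indicator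
            (fun ω => pathReward q (fun ω => min (n : ℕ∞) (TKt K ω)) (pathShift 1 ω)) ω := by
  by_cases h1 : ω 1 ∈ K
  · have hT : TKt K ω = 1 := le_antisymm (hit_le le_rfl (by simpa using h1))
      (le_hit_iff.2 fun i hi _ => by exact_mod_cast hi)
    rw [Set.indicator_of_notMem (by simpa using h1), add_zero,
      pathReward_of_eq_coe (n := 1) (by simp [hT])]
    simp
  · have hT : TKt K ω = 1 + TKt K (pathShift 1 ω) :=
      hit_eq_add_hit_pathShift (by omega) fun i hi hi' => by
        obtain rfl : i = 1 := by omega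
        simpa using h1
    rw [Set.indicator_of_mem (by simpa using h1),
      pathReward_eq_sum_add_pathShift (n := 1) (τ' := fun ω => min (n : ℕ∞) (TKt K ω))]
    · simp
    · rw [hT, ← min_add_add_left]
      push_cast
      rw [add_comm]

end PathReward

theorem valueAt_min_TKt_TA_le {α : Type*} [DecidableEq α] {K A : Finset α} (hKA : K ⊆ A)
    {z : α} {f : α → ℝ≥0∞} {v : α → ℝ} {M : ℝ≥0∞} (hfz : f z = 0)
    (hfA : ∀ y ∉ A, f y ≤ ENNReal.ofReal (v y) + M) (ω : ℕ → α) :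
    valueAt (fun ω => min (TKt K ω) (TA A ω)) (fun n ω => f (ω n)) ω
      ≤ ∑ y ∈ K.erase z, {ω | TKt K ω < TA A ω ∧ evalAt ω (TKt K ω) = y}.indicator (fun _ => f y) ω
        + (if TA A ω < TKt K ω then ENNReal.ofReal (v (evalAt ω (TA A ω))) else 0)
        + {ω | TA A ω < TKt K ω}.indicator (fun _ => M) ω := by
  rcases eq_or_ne (min (TKt K ω) (TA A ω)) ⊤ with h | h
  · simp [valueAt_of_eq_top (τ := fun ω => min (TKt K ω) (TA A ω)) h]
  obtain ⟨n, hn⟩ := ENat.ne_top_iff_exists.1 h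
  rw [valueAt_of_eq_coe (τ := fun ω => min (TKt K ω) (TA A ω)) hn.symm]
  rcases min_eq_iff.1 hn.symm with ⟨hK, hKle⟩ | ⟨hA, hAle⟩
  · have hωK : ω n ∈ K := by simpa using mem_of_hit_eq hK
    have hlt : TKt K ω < TA A ω := by
      refine lt_of_le_of_ne hKle fun heq => ?_
      have : ω n ∉ A := by simpa using mem_of_hit_eq (heq.symm.trans hK)
      exact this (hKA hωK)
    by_cases hz : ω n = z
    · simp [hz, hfz]
    refine le_add_right (le_add_right ?_)
    refine le_of_eq_of_le ?_ (Finset.single_le_sum (fun _ _ => zero_le)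
      (Finset.mem_erase.2 ⟨hz, hωK⟩))
    rw [Set.indicator_of_mem]
    exact ⟨hlt, by simp [evalAt, hK]⟩
  · have hωA : ω n ∉ A := by simpa using mem_of_hit_eq hA
    have hlt : TA A ω < TKt K ω := by
      refine lt_of_le_of_ne hAle fun heq => hωA (hKA ?_)
      simpa using mem_of_hit_eq (heq.symm.trans hA)
    rw [if_pos hlt, Set.indicator_of_mem (show ω ∈ {ω | TA A ω < TKt K ω} from hlt), add_assoc]
    refine le_add_left ?_
    simpa [evalAt, hA] using hfA _ hωA

namespace MC

theorem A1.tsum_le {X : MC S} {K : Finset S} {q v : S → ℝ} {c : ℝ}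
    (hA1 : X.A1 (K : Set S) q v c) {x : S} (hx : x ∉ K) :
    ∑' y, X.P x y * v y ≤ v x - q x := by
  simpa [Set.indicator_of_notMem (show x ∉ (K : Set S) by simpa using hx)] using hA1.2.2 x

variable (X : MC S) [MeasurableSingletonClass S]

theorem ae_eval_zero (x : S) : ∀ᵐ ω ∂X.μ x, ω 0 = x := by
  have := X.prob x
  have hcyl : {ω : ℕ → S | ¬ ω 0 = x} = (pathCylinder 0 fun _ => x)ᶜ := by
    ext ω
    simp [pathCylinder]
  rw [ae_iff, hcyl, prob_compl_eq_zero_iff (measurableSet_pathCylinder 0 _)]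
  exact (X.fdd x 0 fun _ => x).trans (by simp)

theorem lintegral_comp_eval_zero (x : S) (h : S → ℝ≥0∞) : ∫⁻ ω, h (ω 0) ∂X.μ x = h x := by
  have := X.prob x
  rw [lintegral_congr_ae ((X.ae_eval_zero x).mono fun ω hω => by rw [hω]), lintegral_const,
    measure_univ, mul_one]

theorem ER_psiz_self (q : S → ℝ) (z : S) : X.ER z q (psiz z) = 0 := by
  refine (lintegral_congr_ae ((X.ae_eval_zero z).mono fun ω hω => ?_)).trans lintegral_zero
  have hψ : psiz z ω = (0 : ℕ) := nonpos_iff_eq_zero.1 (hit_le le_rfl hω)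
  simp [pathReward_of_eq_coe hψ]

theorem measure_eval_one (x y : S) : X.μ x {ω | ω 1 = y} = ENNReal.ofReal (X.P x y) := by
  rw [← measure_inter_conull (t := {ω | ω 0 = x}) (ae_iff.1 (X.ae_eval_zero x))]
  have hcyl : {ω : ℕ → S | ω 1 = y} ∩ {ω | ω 0 = x}
      = pathCylinder 1 fun j => if j = 0 then x else y := by
    ext ω
    simp only [pathCylinder, Set.mem_inter_iff, Set.mem_ofPred_eq, Nat.le_one_iff_eq_zero_or_eq_one,
      forall_eq_or_imp, forall_eq]
    simp [and_comm]
  rw [hcyl]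
  exact (X.fdd x 1 _).trans (by simp)

variable [Countable S]

theorem lintegral_comp_eval_one (x : S) (h : S → ℝ≥0∞) :
    ∫⁻ ω, h (ω 1) ∂X.μ x = ∑' y, ENNReal.ofReal (X.P x y) * h y := by
  rw [← lintegral_map (measurable_of_countable h) (measurable_pi_apply 1), lintegral_countable']
  refine tsum_congr fun y => ?_
  rw [Measure.map_apply (measurable_pi_apply 1) (measurableSet_singleton y), mul_comm]
  exact congrArg (· * h y) (X.measure_eval_one x y)

variable {X} {K : Finset S} {q v : S → ℝ} {c : ℝ}

theorem A1.lintegral_comp_eval_one_le (hA1 : X.A1 (K : Set S) q v c) {x : S} (hx : x ∉ K) :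
    ∫⁻ ω, ENNReal.ofReal (v (ω 1)) ∂X.μ x ≤ ENNReal.ofReal (v x - q x) := by
  rw [X.lintegral_comp_eval_one x fun y => ENNReal.ofReal (v y)]
  simp_rw [← ENNReal.ofReal_mul (X.nonneg x _)]
  rw [← ENNReal.ofReal_tsum_of_nonneg (fun y => mul_nonneg (X.nonneg x y) (hA1.1 y)) (hA1.2.1 x)]
  exact ENNReal.ofReal_le_ofReal (hA1.tsum_le hx)

theorem lintegral_pathReward_min_TKt_le (hq : ∀ x, 0 ≤ q x) (hA1 : X.A1 (K : Set S) q v c)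
    (n : ℕ) {x : S} (hx : x ∉ K) :
    ∫⁻ ω, pathReward q (fun ω => min (n : ℕ∞) (TKt K ω)) ω ∂X.μ x ≤ ENNReal.ofReal (v x) := by
  induction n generalizing x with
  | zero => simp [pathReward]
  | succ n ih =>
    have hE : DependsOn (· ∈ {ω : ℕ → S | ω 1 ∉ K}) (Set.Iic 1) := fun ω ω' h => by
      simp only [Set.mem_ofPred_eq, h 1 (Set.mem_Iic.2 le_rfl)]
    have hEm : MeasurableSet {ω : ℕ → S | ω 1 ∉ K} := measurableSet_of_dependsOn hE
    have hvq : 0 ≤ v x - q x :=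
      (tsum_nonneg fun y => mul_nonneg (X.nonneg x y) (hA1.1 y)).trans (hA1.tsum_le hx)
    simp_rw [pathReward_min_succ_TKt]
    have hq0 : Measurable fun ω : ℕ → S => ENNReal.ofReal (q (ω 0)) :=
      ((measurable_of_countable q).comp (measurable_pi_apply 0)).ennreal_ofReal
    rw [lintegral_add_left hq0, X.lintegral_comp_eval_zero x fun y => ENNReal.ofReal (q y),
      lintegral_indicator hEm,
      X.setLIntegral_comp_pathShift x hE (measurable_pathReward_min_TKt q K n)]
    calc ENNReal.ofReal (q x) + ∫⁻ ω in {ω | ω 1 ∉ K},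
            ∫⁻ ω', pathReward q (fun ω => min (n : ℕ∞) (TKt K ω)) ω' ∂X.μ (ω 1) ∂X.μ x
        ≤ ENNReal.ofReal (q x) + ∫⁻ ω, ENNReal.ofReal (v (ω 1)) ∂X.μ x := by
          refine add_le_add le_rfl ?_
          have hv1 : Measurable fun ω : ℕ → S => ENNReal.ofReal (v (ω 1)) :=
            ((measurable_of_countable v).comp (measurable_pi_apply 1)).ennreal_ofReal
          exact (setLIntegral_mono hv1 fun ω hω => ih hω).trans (setLIntegral_le_lintegral _ _)
      _ ≤ ENNReal.ofReal (q x) + ENNReal.ofReal (v x - q x) := by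
          gcongr
          exact hA1.lintegral_comp_eval_one_le hx
      _ = ENNReal.ofReal (v x) := by
          rw [← ENNReal.ofReal_add (hq x) hvq, add_sub_cancel]

theorem ER_TKt_le (hq : ∀ x, 0 ≤ q x) (hA1 : X.A1 (K : Set S) q v c) {x : S} (hx : x ∉ K) :
    X.ER x q (TKt K) ≤ ENNReal.ofReal (v x) := by
  rw [MC.ER, lintegral_congr fun ω => pathReward_eq_iSup_min q (TKt K) ω,
    lintegral_iSup (fun n => measurable_pathReward_min_TKt q K n)
      fun a b hab ω => pathReward_mono (min_le_min_right _ (by exact_mod_cast hab))]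
  exact iSup_le fun n => X.lintegral_pathReward_min_TKt_le hq hA1 n hx

variable (X) in
theorem ER_psiz_le_add_valueAt (x z : S) (q : S → ℝ) {τ : (ℕ → S) → ℕ∞}
    (hτ : IsNaturalStoppingTime τ) :
    X.ER x q (psiz z)
      ≤ X.ER x q τ + ∫⁻ ω, valueAt τ (fun n ω => X.ER (ω n) q (psiz z)) ω ∂X.μ x := by
  calc X.ER x q (psiz z)
      ≤ ∫⁻ ω, pathReward q τ ω
          + valueAt τ (fun n ω => pathReward q (psiz z) (pathShift n ω)) ω ∂X.μ x :=
        lintegral_mono fun ω => pathReward_psiz_le_add_valueAt z τ ω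
    _ = _ := by
        rw [lintegral_add_left (measurable_pathReward hτ q), X.lintegral_valueAt_comp_pathShift x hτ
          (measurable_pathReward (isNaturalStoppingTime_psiz z) q)]
        rfl

theorem ER_psiz_le_of_notMem (hq : ∀ x, 0 ≤ q x) (hA1 : X.A1 (K : Set S) q v c) {z : S}
    {M : ℝ≥0∞} (hM : ∀ w ∈ K, X.ER w q (psiz z) ≤ M) {y : S} (hy : y ∉ K) :
    X.ER y q (psiz z) ≤ ENNReal.ofReal (v y) + M := by
  have := X.prob y
  refine (X.ER_psiz_le_add_valueAt y z q (isNaturalStoppingTime_TKt K)).trans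
    (add_le_add (ER_TKt_le hq hA1 hy) ?_)
  calc ∫⁻ ω, valueAt (TKt K) (fun n ω => X.ER (ω n) q (psiz z)) ω ∂X.μ y
      ≤ ∫⁻ _, M ∂X.μ y := lintegral_mono fun ω => ?_
    _ = M := by simp
  rcases eq_or_ne (TKt K ω) ⊤ with h | h
  · simp [valueAt_of_eq_top h]
  obtain ⟨n, hn⟩ := ENat.ne_top_iff_exists.1 h
  rw [valueAt_of_eq_coe hn.symm]
  exact hM _ (by simpa using mem_of_hit_eq hn.symm)

end MC

theorem key_inequality_on_Ktilde_general
    [Countable S] [MeasurableSingletonClass S]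
    (X : MC S)
    (K A : Finset S) (hKA : K ⊆ A) (z : S)
    (q v : S → ℝ) (c : ℝ) (hq : ∀ x, 0 ≤ q x)
    (hA1 : X.A1 (K : Set S) q v c) :
    ∀ x ∈ K.erase z,
      X.ER x q (psiz z)
        ≤ X.ER x q (fun ω => min (TKt K ω) (TA A ω))
          + (∫⁻ ω, (if TA A ω < TKt K ω then ENNReal.ofReal (v (evalAt ω (TA A ω))) else 0)
              ∂ X.μ x)
          + (∑ y ∈ K.erase z,
              X.μ x {ω | TKt K ω < TA A ω ∧ evalAt ω (TKt K ω) = y} * X.ER y q (psiz z))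
          + X.μ x {ω | TA A ω < TKt K ω} * (K.erase z).sup (fun w => X.ER w q (psiz z)) := by
  intro x _
  set f := fun y => X.ER y q (psiz z)
  set M := (K.erase z).sup f
  have hfz : f z = 0 := X.ER_psiz_self q z
  have hfK : ∀ w ∈ K, f w ≤ M := fun w hw => by
    by_cases hwz : w = z
    · simp [hwz, hfz]
    · exact Finset.le_sup (Finset.mem_erase.2 ⟨hwz, hw⟩)
  have hfA : ∀ y ∉ A, f y ≤ ENNReal.ofReal (v y) + M := fun y hy =>
    MC.ER_psiz_le_of_notMem hq hA1 hfK fun hyK => hy (hKA hyK)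
  have hTK := isNaturalStoppingTime_TKt K
  have hTA := isNaturalStoppingTime_TA A
  have hfirst (y : S) : MeasurableSet {ω | TKt K ω < TA A ω ∧ evalAt ω (TKt K ω) = y} :=
    hTK.measurableSet_lt_and_evalAt_mem hTA {y}
  calc f x ≤ X.ER x q (fun ω => min (TKt K ω) (TA A ω))
          + ∫⁻ ω, valueAt (fun ω => min (TKt K ω) (TA A ω)) (fun n ω => f (ω n)) ω ∂X.μ x :=
        X.ER_psiz_le_add_valueAt x z q (hTK.min hTA)
    _ ≤ _ := add_le_add le_rfl (lintegral_mono (valueAt_min_TKt_TA_le hKA hfz hfA))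
    _ = _ := by
        rw [lintegral_add_right _ (measurable_const.indicator (hTA.measurableSet_lt hTK)),
          lintegral_add_left
            (Finset.measurable_sum _ fun y _ => measurable_const.indicator (hfirst y)),
          lintegral_finsetSum _ fun y _ => measurable_const.indicator (hfirst y),
          lintegral_indicator_const (hTA.measurableSet_lt hTK)]
        simp only [lintegral_indicator_const (hfirst _), mul_comm _ M, mul_comm (f _)]
        ring

/-- **The key inequality (7) on `K̃`.** For an irreducible recurrent chain,
finite `K ⊆ A ⊆ S`, `z ∈ K`, and `q : S → ℝ₊` satisfying A1(q) with Lyapunov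
function `v`: with `f(x) = 𝔼_x Σ_{j=0}^{ψ(z)-1} q(X_j)`,
`G(x,y) = ℙ_x(X_{T_K} = y, T_K < T)`, `ξ(x) = ℙ_x(T < T_K)`,
`k(x,q) = 𝔼_x Σ_{j=0}^{(T_K∧T)-1} q(X_j)`, `k̃'(x,q) = 𝔼_x[v(X_T); T < T_K]`
and `β = k + k̃'`, one has for every `x ∈ K̃ = K \ {z}`:
`f(x) ≤ β(x,q) + Σ_{y ∈ K̃} G(x,y) f(y) + ξ(x)·max_{w ∈ K̃} f(w)`. -/
theorem key_inequality_on_Ktilde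
    [Countable S] [MeasurableSingletonClass S]
    (X : MC S) (hirr : X.Irreducible) (hrec : X.Recurrent)
    (K A : Finset S) (hKA : K ⊆ A) (z : S) (hz : z ∈ K)
    (q v : S → ℝ) (c : ℝ) (hq : ∀ x, 0 ≤ q x)
    (hA1 : X.A1 (K : Set S) q v c) :
    ∀ x ∈ K.erase z,
      X.ER x q (psiz z)
        ≤ X.ER x q (fun ω => min (TKt K ω) (TA A ω))
          + (∫⁻ ω, (if TA A ω < TKt K ω then ENNReal.ofReal (v (evalAt ω (TA A ω))) else 0)
              ∂ X.μ x)
          + (∑ y ∈ K.erase z,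
              X.μ x {ω | TKt K ω < TA A ω ∧ evalAt ω (TKt K ω) = y} * X.ER y q (psiz z))
          + X.μ x {ω | TA A ω < TKt K ω} * (K.erase z).sup (fun w => X.ER w q (psiz z)) :=
  key_inequality_on_Ktilde_general X K A hKA z q v c hq hA1

end
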